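/- There is an absolute constant C > 0 such that for every n ≥ 1 and every access sequence S = (s_1,…,s_m) ∈ {1,…,n}^m, the weighted static finger bound is dominated by the fixed finger bound: WSF(S) ≤ C·(FF(S) + m). -/
import Mathlib


/-- Binary trees with natural-number keys. -/
inductive BTree : Type where
  | leaf : BTree
  | node : BTree → ℕ → BTree → BTree

namespace BTree

/-- The set of keys appearing in the tree. -/
def keys : BTree → Finset ℕ
  | leaf => ∅
  | node l x r => keys l ∪ {x} ∪ keys r

/-- Binary search tree property: left keys smaller, right keys larger. -/
def IsSearchTree : BTree → Prop
  | leaf => True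
  | node l x r => (∀ y ∈ keys l, y < x) ∧ (∀ y ∈ keys r, x < y) ∧
      IsSearchTree l ∧ IsSearchTree r

/-- Depth of the key `y` (number of edges from the root), via the search path. -/
def depth : BTree → ℕ → ℕ
  | leaf, _ => 0
  | node l x r, y =>
      if y = x then 0
      else if y < x then depth l y + 1
      else depth r y + 1

/-- Number of edges on the path between the keys `a` and `b` (for a search tree). -/
def dist : BTree → ℕ → ℕ → ℕ
  | leaf, _, _ => 0
  | node l x r, a, b =>
      if a < x ∧ b < x then dist l a b
      else if x < a ∧ x < b then dist r a b
      else depth (node l x r) a + depth (node l x r) b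

/-- `T` is a binary search tree on the key set `{1, …, n}`. -/
def IsBSTOn (T : BTree) (n : ℕ) : Prop :=
  T.IsSearchTree ∧ T.keys = Finset.Icc 1 n

end BTree

/-- The weighted static finger bound `WSF(S)`: infimum over positive weight functions `w`
and finger keys `f ∈ {1,…,n}` of `∑_j log₂( w[f:s_j] / min(w f, w s_j) )`, where
`w[i:j]` is the total weight of the keys between `i` and `j`. -/
noncomputable def WSF (n : ℕ) {m : ℕ} (S : Fin m → ℕ) : ℝ :=
  sInf {x : ℝ | ∃ w : ℕ → ℝ, ∃ f ∈ Finset.Icc 1 n,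
    (∀ i ∈ Finset.Icc 1 n, 0 < w i) ∧
    x = ∑ j, Real.logb 2
      ((∑ i ∈ Finset.Icc (min f (S j)) (max f (S j)), w i) / min (w f) (w (S j)))}

/-- The fixed finger bound `FF(S)`: minimum over BSTs `T` on `{1,…,n}` and finger keys
`f ∈ {1,…,n}` of `∑_j d_T(f, s_j)`. -/
noncomputable def FF (n : ℕ) {m : ℕ} (S : Fin m → ℕ) : ℝ :=
  sInf {x : ℝ | ∃ T : BTree, ∃ f ∈ Finset.Icc 1 n, T.IsBSTOn n ∧
    x = ∑ j, (BTree.dist T f (S j) : ℝ)}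


open BTree Real Finset

namespace BTreeAux

lemma depth_node_lt {l r : BTree} {x y : ℕ} (h : y < x) :
    BTree.depth (BTree.node l x r) y = BTree.depth l y + 1 := by
  simp [BTree.depth, h, Nat.ne_of_lt h]

lemma depth_node_gt {l r : BTree} {x y : ℕ} (h : x < y) :
    BTree.depth (BTree.node l x r) y = BTree.depth r y + 1 := by
  have h1 : y ≠ x := Nat.ne_of_gt h
  have h2 : ¬ y < x := by omega
  simp [BTree.depth, h1, h2]

lemma depth_node_self {l r : BTree} {x : ℕ} :
    BTree.depth (BTree.node l x r) x = 0 := by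
  simp [BTree.depth]

lemma dist_self : ∀ (T : BTree) (a : ℕ), BTree.dist T a a = 0 := by
  intro T
  induction T with
  | leaf => intro a; rfl
  | node l x r ihl ihr =>
    intro a
    rcases lt_trichotomy a x with h | h | h
    · simp [BTree.dist, h, ihl]
    · subst h
      simp [BTree.dist, depth_node_self]
    · have h2 : ¬ a < x := by omega
      simp [BTree.dist, h, h2, ihr]

lemma keys_node_sum (g : ℕ → ℝ) {l r : BTree} {x : ℕ}
    (hl : ∀ y ∈ BTree.keys l, y < x) (hr : ∀ y ∈ BTree.keys r, x < y) :
    ∑ i ∈ BTree.keys (BTree.node l x r), g i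
      = (∑ i ∈ BTree.keys l, g i) + g x + ∑ i ∈ BTree.keys r, g i := by
  have d1 : Disjoint (BTree.keys l) ({x} : Finset ℕ) := by
    rw [Finset.disjoint_left]
    intro a ha hax
    rw [Finset.mem_singleton] at hax
    exact absurd hax (Nat.ne_of_lt (hl a ha))
  have d2 : Disjoint (BTree.keys l ∪ {x}) (BTree.keys r) := by
    rw [Finset.disjoint_left]
    intro a ha har
    rcases Finset.mem_union.mp ha with h | h
    · exact absurd (lt_trans (hl a h) (hr a har)) (lt_irrefl a)
    · rw [Finset.mem_singleton] at h; subst h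
      exact absurd (hr a har) (lt_irrefl a)
  show ∑ i ∈ (BTree.keys l ∪ {x} ∪ BTree.keys r), g i = _
  rw [Finset.sum_union d2, Finset.sum_union d1, Finset.sum_singleton]

lemma depth_sum : ∀ (T : BTree), T.IsSearchTree →
    (∑ i ∈ T.keys, ((4:ℝ)⁻¹) ^ T.depth i) ≤ 2 := by
  intro T
  induction T with
  | leaf => intro _; simp [BTree.keys]
  | node l x r ihl ihr =>
    intro hT
    obtain ⟨hl, hr, hsl, hsr⟩ := hT
    rw [keys_node_sum _ hl hr]
    have el : ∑ i ∈ BTree.keys l, ((4:ℝ)⁻¹) ^ (BTree.node l x r).depth i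
        = ∑ i ∈ BTree.keys l, (4:ℝ)⁻¹ * ((4:ℝ)⁻¹) ^ l.depth i := by
      refine Finset.sum_congr rfl fun i hi => ?_
      rw [depth_node_lt (hl i hi), pow_succ]
      ring
    have er : ∑ i ∈ BTree.keys r, ((4:ℝ)⁻¹) ^ (BTree.node l x r).depth i
        = ∑ i ∈ BTree.keys r, (4:ℝ)⁻¹ * ((4:ℝ)⁻¹) ^ r.depth i := by
      refine Finset.sum_congr rfl fun i hi => ?_
      rw [depth_node_gt (hr i hi), pow_succ]
      ring
    rw [el, er, depth_node_self, ← Finset.mul_sum, ← Finset.mul_sum]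
    have h1 := ihl hsl
    have h2 := ihr hsr
    norm_num
    nlinarith [h1, h2]

lemma dist_sum : ∀ (T : BTree), T.IsSearchTree → ∀ f : ℕ,
    (∑ i ∈ T.keys, ((4:ℝ)⁻¹) ^ T.dist f i) ≤ 5/2 - (1/2) * ((4:ℝ)⁻¹) ^ T.depth f := by
  intro T
  induction T with
  | leaf => intro _ f; simp [BTree.keys, BTree.depth]; norm_num
  | node l x r ihl ihr =>
    intro hT f
    obtain ⟨hl, hr, hsl, hsr⟩ := hT
    rw [keys_node_sum _ hl hr]
    rcases lt_trichotomy f x with hf | hf | hf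
    · -- f < x
      have el : ∑ i ∈ BTree.keys l, ((4:ℝ)⁻¹) ^ (BTree.node l x r).dist f i
          = ∑ i ∈ BTree.keys l, ((4:ℝ)⁻¹) ^ l.dist f i := by
        refine Finset.sum_congr rfl fun i hi => ?_
        simp [BTree.dist, hf, hl i hi]
      have ex : (BTree.node l x r).dist f x = l.depth f + 1 := by
        have : ¬ (x < x) := lt_irrefl x
        simp [BTree.dist, this, depth_node_self, depth_node_lt hf]
      have er : ∑ i ∈ BTree.keys r, ((4:ℝ)⁻¹) ^ (BTree.node l x r).dist f i
          = ∑ i ∈ BTree.keys r, (4:ℝ)⁻¹ * (4:ℝ)⁻¹ * ((4:ℝ)⁻¹) ^ l.depth f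
              * ((4:ℝ)⁻¹) ^ r.depth i := by
        refine Finset.sum_congr rfl fun i hi => ?_
        have hxi := hr i hi
        have c1 : ¬ (f < x ∧ i < x) := by omega
        have c2 : ¬ (x < f ∧ x < i) := by omega
        have : (BTree.node l x r).dist f i = (l.depth f + 1) + (r.depth i + 1) := by
          simp [BTree.dist, c1, c2, depth_node_lt hf, depth_node_gt hxi]
        rw [this]
        rw [pow_add, pow_succ, pow_succ]
        ring
      rw [el, ex, er]
      have hL := ihl hsl f
      have hR := depth_sum r hsr
      have hdn : (BTree.node l x r).depth f = l.depth f + 1 := depth_node_lt hf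
      rw [hdn]
      set a : ℝ := ((4:ℝ)⁻¹) ^ l.depth f with ha
      have hap : 0 < a := pow_pos (by norm_num) _
      have e2 : ∑ i ∈ BTree.keys r, (4:ℝ)⁻¹ * (4:ℝ)⁻¹ * a * ((4:ℝ)⁻¹) ^ r.depth i
          = (4:ℝ)⁻¹ * (4:ℝ)⁻¹ * a * ∑ i ∈ BTree.keys r, ((4:ℝ)⁻¹) ^ r.depth i := by
        rw [Finset.mul_sum]
      rw [e2, pow_succ, ← ha]
      nlinarith [hL, hR, hap]
    · -- f = x
      subst hf
      have el : ∑ i ∈ BTree.keys l, ((4:ℝ)⁻¹) ^ (BTree.node l f r).dist f i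
          = ∑ i ∈ BTree.keys l, (4:ℝ)⁻¹ * ((4:ℝ)⁻¹) ^ l.depth i := by
        refine Finset.sum_congr rfl fun i hi => ?_
        have hix := hl i hi
        have c1 : ¬ (f < f ∧ i < f) := by omega
        have c2 : ¬ (f < f ∧ f < i) := by omega
        have : (BTree.node l f r).dist f i = 0 + (l.depth i + 1) := by
          simp [BTree.dist, c1, c2, depth_node_self, depth_node_lt hix]
        rw [this, zero_add, pow_succ]
        ring
      have ex : (BTree.node l f r).dist f f = 0 := dist_self _ _
      have er : ∑ i ∈ BTree.keys r, ((4:ℝ)⁻¹) ^ (BTree.node l f r).dist f i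
          = ∑ i ∈ BTree.keys r, (4:ℝ)⁻¹ * ((4:ℝ)⁻¹) ^ r.depth i := by
        refine Finset.sum_congr rfl fun i hi => ?_
        have hix := hr i hi
        have c1 : ¬ (f < f ∧ i < f) := by omega
        have c2 : ¬ (f < f ∧ f < i) := by omega
        have : (BTree.node l f r).dist f i = 0 + (r.depth i + 1) := by
          simp [BTree.dist, c1, c2, depth_node_self, depth_node_gt hix]
        rw [this, zero_add, pow_succ]
        ring
      rw [el, ex, er, depth_node_self, ← Finset.mul_sum, ← Finset.mul_sum]
      have h1 := depth_sum l hsl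
      have h2 := depth_sum r hsr
      norm_num
      nlinarith [h1, h2]
    · -- x < f
      have hnf : ¬ f < x := by omega
      have er : ∑ i ∈ BTree.keys r, ((4:ℝ)⁻¹) ^ (BTree.node l x r).dist f i
          = ∑ i ∈ BTree.keys r, ((4:ℝ)⁻¹) ^ r.dist f i := by
        refine Finset.sum_congr rfl fun i hi => ?_
        have c1 : ¬ (f < x ∧ i < x) := by omega
        simp [BTree.dist, c1, hf, hr i hi]
      have ex : (BTree.node l x r).dist f x = r.depth f + 1 := by
        have c1 : ¬ (f < x ∧ x < x) := by omega
        have c2 : ¬ (x < f ∧ x < x) := by omega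
        simp [BTree.dist, c1, c2, depth_node_self, depth_node_gt hf]
      have el : ∑ i ∈ BTree.keys l, ((4:ℝ)⁻¹) ^ (BTree.node l x r).dist f i
          = ∑ i ∈ BTree.keys l, (4:ℝ)⁻¹ * (4:ℝ)⁻¹ * ((4:ℝ)⁻¹) ^ r.depth f
              * ((4:ℝ)⁻¹) ^ l.depth i := by
        refine Finset.sum_congr rfl fun i hi => ?_
        have hix := hl i hi
        have c1 : ¬ (f < x ∧ i < x) := by omega
        have c2 : ¬ (x < f ∧ x < i) := by omega
        have : (BTree.node l x r).dist f i = (r.depth f + 1) + (l.depth i + 1) := by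
          simp [BTree.dist, c1, c2, depth_node_gt hf, depth_node_lt hix]
        rw [this, pow_add, pow_succ, pow_succ]
        ring
      rw [el, ex, er]
      have hRi := ihr hsr f
      have hLd := depth_sum l hsl
      have hdn : (BTree.node l x r).depth f = r.depth f + 1 := depth_node_gt hf
      rw [hdn]
      set a : ℝ := ((4:ℝ)⁻¹) ^ r.depth f with ha
      have hap : 0 < a := pow_pos (by norm_num) _
      have e2 : ∑ i ∈ BTree.keys l, (4:ℝ)⁻¹ * (4:ℝ)⁻¹ * a * ((4:ℝ)⁻¹) ^ l.depth i
          = (4:ℝ)⁻¹ * (4:ℝ)⁻¹ * a * ∑ i ∈ BTree.keys l, ((4:ℝ)⁻¹) ^ l.depth i := by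
        rw [Finset.mul_sum]
      rw [e2, pow_succ, ← ha]
      nlinarith [hRi, hLd, hap]

end BTreeAux

namespace BTreeAux

def spine : ℕ → ℕ → BTree
  | 0, _ => BTree.leaf
  | k+1, a => BTree.node BTree.leaf a (spine k (a+1))

lemma spine_keys : ∀ k a, (spine k a).keys = Finset.Ico a (a + k) := by
  intro k
  induction k with
  | zero => intro a; simp [spine, BTree.keys]
  | succ k ih =>
    intro a
    show (BTree.keys BTree.leaf ∪ {a} ∪ (spine k (a+1)).keys) = _
    rw [ih]
    ext y
    simp [BTree.keys, Finset.mem_Ico]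
    omega

lemma spine_search : ∀ k a, (spine k a).IsSearchTree := by
  intro k
  induction k with
  | zero => intro a; trivial
  | succ k ih =>
    intro a
    refine ⟨?_, ?_, trivial, ih (a+1)⟩
    · intro y hy; simp [BTree.keys] at hy
    · intro y hy
      rw [spine_keys] at hy
      rw [Finset.mem_Ico] at hy
      omega

lemma spine_bst (n : ℕ) : (spine n 1).IsBSTOn n := by
  refine ⟨spine_search n 1, ?_⟩
  rw [spine_keys]
  ext y
  simp [Finset.mem_Ico, Finset.mem_Icc]
  omega

lemma access_bound {T : BTree} {n : ℕ} (hT : T.IsBSTOn n) {f s : ℕ}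
    (hf : f ∈ Finset.Icc 1 n) (hs : s ∈ Finset.Icc 1 n) :
    Real.logb 2
      ((∑ i ∈ Finset.Icc (min f s) (max f s), ((4:ℝ)⁻¹) ^ T.dist f i)
        / min (((4:ℝ)⁻¹) ^ T.dist f f) (((4:ℝ)⁻¹) ^ T.dist f s))
      ≤ 2 * (T.dist f s + 1) := by
  obtain ⟨hsearch, hkeys⟩ := hT
  rw [Finset.mem_Icc] at hf hs
  set d := T.dist f s with hd
  have hwf : ((4:ℝ)⁻¹) ^ T.dist f f = 1 := by rw [dist_self]; rfl
  have hws : (0:ℝ) < ((4:ℝ)⁻¹) ^ d := pow_pos (by norm_num) _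
  have hws1 : ((4:ℝ)⁻¹) ^ d ≤ 1 := pow_le_one₀ (by norm_num) (by norm_num)
  have hmin : min (((4:ℝ)⁻¹) ^ T.dist f f) (((4:ℝ)⁻¹) ^ T.dist f s) = ((4:ℝ)⁻¹) ^ d := by
    rw [hwf, ← hd, min_eq_right hws1]
  rw [hmin]
  have hsub : Finset.Icc (min f s) (max f s) ⊆ T.keys := by
    rw [hkeys]
    exact Finset.Icc_subset_Icc (le_min hf.1 hs.1) (max_le hf.2 hs.2)
  have hsum_le : (∑ i ∈ Finset.Icc (min f s) (max f s), ((4:ℝ)⁻¹) ^ T.dist f i)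
      ≤ ∑ i ∈ T.keys, ((4:ℝ)⁻¹) ^ T.dist f i := by
    refine Finset.sum_le_sum_of_subset_of_nonneg hsub fun i _ _ => ?_
    positivity
  have hΦ : (∑ i ∈ T.keys, ((4:ℝ)⁻¹) ^ T.dist f i) ≤ 5/2 := by
    have := dist_sum T hsearch f
    have h2 : (0:ℝ) < ((4:ℝ)⁻¹) ^ T.depth f := pow_pos (by norm_num) _
    linarith
  have hsum_pos : (0:ℝ) < ∑ i ∈ Finset.Icc (min f s) (max f s), ((4:ℝ)⁻¹) ^ T.dist f i := by
    have hmem : s ∈ Finset.Icc (min f s) (max f s) := by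
      rw [Finset.mem_Icc]; exact ⟨min_le_right _ _, le_max_right _ _⟩
    refine Finset.sum_pos' (fun i _ => by positivity) ⟨s, hmem, by positivity⟩
  have hratio : (∑ i ∈ Finset.Icc (min f s) (max f s), ((4:ℝ)⁻¹) ^ T.dist f i)
      / ((4:ℝ)⁻¹) ^ d ≤ (4:ℝ) ^ (d + 1) := by
    rw [div_le_iff₀ hws]
    have h4 : ((4:ℝ)) ^ (d + 1) * ((4:ℝ)⁻¹) ^ d = 4 := by
      rw [inv_pow, pow_succ]
      field_simp
    rw [h4]
    linarith
  have hlog : Real.logb 2 ((∑ i ∈ Finset.Icc (min f s) (max f s), ((4:ℝ)⁻¹) ^ T.dist f i)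
      / ((4:ℝ)⁻¹) ^ d) ≤ Real.logb 2 ((4:ℝ) ^ (d + 1)) := by
    refine Real.logb_le_logb_of_le (by norm_num) (by positivity) hratio
  refine le_trans hlog ?_
  have h24 : Real.logb 2 4 = 2 := by
    have h4 : (4:ℝ) = 2 ^ (2:ℕ) := by norm_num
    rw [h4, Real.logb_pow, Real.logb_self_eq_one (by norm_num)]
    norm_num
  have hlp : Real.logb 2 ((4:ℝ) ^ (d + 1)) = ((d:ℝ) + 1) * Real.logb 2 4 := by
    rw [Real.logb_pow]
    push_cast
    ring
  rw [hlp, h24]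
  ring_nf
  norm_num

end BTreeAux



/-- There is an absolute constant `C > 0` such that for every `n ≥ 1` and every access
sequence `S ∈ {1,…,n}^m`, the weighted static finger bound is dominated by the fixed
finger bound: `WSF(S) ≤ C·(FF(S) + m)`. -/
theorem wsf_le_ff : ∃ C : ℝ, 0 < C ∧ ∀ (n m : ℕ) (S : Fin m → ℕ),
    1 ≤ n → (∀ j, S j ∈ Finset.Icc 1 n) →
    WSF n S ≤ C * (FF n S + m) := by
  refine ⟨2, by norm_num, ?_⟩
  intro n m S hn hS
  set FFset := {x : ℝ | ∃ T : BTree, ∃ f ∈ Finset.Icc 1 n, T.IsBSTOn n ∧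
    x = ∑ j, (BTree.dist T f (S j) : ℝ)} with hFFset
  set WSFset := {x : ℝ | ∃ w : ℕ → ℝ, ∃ f ∈ Finset.Icc 1 n,
    (∀ i ∈ Finset.Icc 1 n, 0 < w i) ∧
    x = ∑ j, Real.logb 2
      ((∑ i ∈ Finset.Icc (min f (S j)) (max f (S j)), w i) / min (w f) (w (S j)))} with hWSFset
  have hWSFbdd : BddBelow WSFset := by
    refine ⟨0, fun x hx => ?_⟩
    obtain ⟨w, f, hf, hw, rfl⟩ := hx
    refine Finset.sum_nonneg fun j _ => ?_
    have hfmem := hf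
    rw [Finset.mem_Icc] at hfmem
    have hsj := hS j
    rw [Finset.mem_Icc] at hsj
    have hwpos : ∀ i ∈ Finset.Icc (min f (S j)) (max f (S j)), 0 < w i := by
      intro i hi
      rw [Finset.mem_Icc] at hi
      refine hw i ?_
      rw [Finset.mem_Icc]
      constructor
      · exact le_trans (le_min hfmem.1 hsj.1) hi.1
      · exact le_trans hi.2 (max_le hfmem.2 hsj.2)
    have hmempos : 0 < w (S j) := hwpos (S j) (by
      rw [Finset.mem_Icc]; exact ⟨min_le_right _ _, le_max_right _ _⟩)
    have hfpos : 0 < w f := hwpos f (by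
      rw [Finset.mem_Icc]; exact ⟨min_le_left _ _, le_max_left _ _⟩)
    have hminpos : 0 < min (w f) (w (S j)) := lt_min hfpos hmempos
    have hsum_ge : min (w f) (w (S j)) ≤ ∑ i ∈ Finset.Icc (min f (S j)) (max f (S j)), w i := by
      refine le_trans (min_le_right _ _) ?_
      refine Finset.single_le_sum (fun i hi => le_of_lt (hwpos i hi)) ?_
      rw [Finset.mem_Icc]; exact ⟨min_le_right _ _, le_max_right _ _⟩
    refine Real.logb_nonneg (by norm_num) ?_
    rw [le_div_iff₀ hminpos]
    linarith
  -- key step: for every element x of FFset, WSF n S ≤ 2 * (x + m)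
  have hkey : ∀ x ∈ FFset, WSF n S ≤ 2 * (x + m) := by
    intro x hx
    obtain ⟨T, f, hf, hT, rfl⟩ := hx
    set w : ℕ → ℝ := fun i => ((4:ℝ)⁻¹) ^ T.dist f i with hwdef
    have hmem : (∑ j, Real.logb 2
        ((∑ i ∈ Finset.Icc (min f (S j)) (max f (S j)), w i) / min (w f) (w (S j)))) ∈ WSFset := by
      exact ⟨w, f, hf, fun i _ => pow_pos (by norm_num) _, rfl⟩
    have h1 : WSF n S ≤ ∑ j, Real.logb 2
        ((∑ i ∈ Finset.Icc (min f (S j)) (max f (S j)), w i) / min (w f) (w (S j))) :=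
      csInf_le hWSFbdd hmem
    refine le_trans h1 ?_
    have h2 : ∀ j : Fin m, Real.logb 2
        ((∑ i ∈ Finset.Icc (min f (S j)) (max f (S j)), w i) / min (w f) (w (S j)))
        ≤ 2 * (T.dist f (S j) + 1) := fun j => BTreeAux.access_bound hT hf (hS j)
    calc (∑ j, Real.logb 2
        ((∑ i ∈ Finset.Icc (min f (S j)) (max f (S j)), w i) / min (w f) (w (S j))))
        ≤ ∑ j : Fin m, 2 * ((T.dist f (S j) : ℝ) + 1) := Finset.sum_le_sum fun j _ => h2 j
      _ = 2 * ((∑ j, (T.dist f (S j) : ℝ)) + m) := by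
          have h3 : ∀ j : Fin m, 2 * ((T.dist f (S j) : ℝ) + 1) = 2 * (T.dist f (S j) : ℝ) + 2 :=
            fun j => by ring
          rw [Finset.sum_congr rfl fun j _ => h3 j, Finset.sum_add_distrib, ← Finset.mul_sum,
            Finset.sum_const, Finset.card_univ, Fintype.card_fin, nsmul_eq_mul]
          ring
  -- FFset is nonempty
  have hFFne : FFset.Nonempty := by
    refine ⟨∑ j, (BTree.dist (BTreeAux.spine n 1) 1 (S j) : ℝ),
      BTreeAux.spine n 1, 1, ?_, BTreeAux.spine_bst n, rfl⟩
    rw [Finset.mem_Icc]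
    exact ⟨le_refl 1, hn⟩
  -- conclude
  have hle : (WSF n S) / 2 - m ≤ FF n S := by
    refine le_csInf hFFne fun x hx => ?_
    have := hkey x hx
    linarith
  linarith [hle]
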